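/- Let L be a real Lie algebra of finite dimension n. Then there exist linear maps F₁, …, Fₙ : ℝⁿ → ℝⁿ, vectors v₁, …, vₙ ∈ ℝⁿ and scalars λ₁, …, λₙ ∈ ℝ with Fᵢ(vᵢ) = λᵢ·vᵢ for each i, together with a linear isomorphism e : L → (ℝⁿ)* such that for all x, y ∈ L: e([x,y]) = Σ_{i=1}^{n} ( (e y)(vᵢ) · Fᵢ*(e x) − (e x)(vᵢ) · Fᵢ*(e y) ). In other words, every finite-dimensional real Lie algebra is isomorphic to ((ℝⁿ)*, [·,·]_{F₁,v₁,…,Fₙ,vₙ}) where [ψ,φ]_{F₁,v₁,…,Fₙ,vₙ} = Σᵢ [ψ,φ]_{Fᵢ,vᵢ}. -/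

import Mathlib

/-- The bracket on the dual space associated with a linear map `T : ℝⁿ → ℝⁿ` and a
vector `u ∈ ℝⁿ`: `[ψ,φ]_{T,u} = φ(u)·T*(ψ) − ψ(u)·T*(φ)`. -/
noncomputable def dualBracket {n : ℕ}
    (T : (Fin n → ℝ) →ₗ[ℝ] (Fin n → ℝ)) (u : Fin n → ℝ)
    (ψ φ : Module.Dual ℝ (Fin n → ℝ)) : Module.Dual ℝ (Fin n → ℝ) :=
  φ u • T.dualMap ψ - ψ u • T.dualMap φ

/-!
Only bilinearity and alternation of the bracket matter, so transport it to `(ℝⁿ)*` along any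
linear isomorphism and take `vᵢ = eᵢ`. Then `Σᵢ [e_p*, e_q*]_{Fᵢ,eᵢ} = e_p* ∘ F_q - e_q* ∘ F_p`,
so one needs matrices `Aᵢ` with `(A_q)_{pm} - (A_p)_{qm} = c_{pq}^m` (the structure constants)
and `Aᵢ eᵢ = 0`; such matrices exist as soon as `c_{pq}^m` is antisymmetric in `p, q`, and every
eigenvalue is then `0`.
-/

open Module

section

variable {n : ℕ}

noncomputable def dualBracketₗ (T : (Fin n → ℝ) →ₗ[ℝ] (Fin n → ℝ)) (u : Fin n → ℝ) :
    Dual ℝ (Fin n → ℝ) →ₗ[ℝ] Dual ℝ (Fin n → ℝ) →ₗ[ℝ] Dual ℝ (Fin n → ℝ) :=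
  LinearMap.mk₂ ℝ (dualBracket T u)
    (fun _ _ _ => by simp only [dualBracket, map_add, LinearMap.add_apply]; module)
    (fun _ _ _ => by simp only [dualBracket, map_smul, LinearMap.smul_apply, smul_eq_mul]; module)
    (fun _ _ _ => by simp only [dualBracket, map_add, LinearMap.add_apply]; module)
    (fun _ _ _ => by simp only [dualBracket, map_smul, LinearMap.smul_apply, smul_eq_mul]; module)

@[simp]
theorem dualBracketₗ_apply (T : (Fin n → ℝ) →ₗ[ℝ] (Fin n → ℝ)) (u : Fin n → ℝ)
    (ψ φ : Dual ℝ (Fin n → ℝ)) : dualBracketₗ T u ψ φ = dualBracket T u ψ φ := rfl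

theorem sum_dualBracket_single_dualBasis_apply (F : Fin n → (Fin n → ℝ) →ₗ[ℝ] (Fin n → ℝ))
    (p q : Fin n) (w : Fin n → ℝ) :
    (∑ i, dualBracket (F i) (Pi.single i 1) ((Pi.basisFun ℝ (Fin n)).dualBasis p)
      ((Pi.basisFun ℝ (Fin n)).dualBasis q)) w = F q w p - F p w q := by
  simp [dualBracket, Pi.single_apply, Finset.sum_sub_distrib]

/-- The `if`-terms are symmetric in `i, j`, so they cancel in
`bracketMatrix c q p m - bracketMatrix c p q m`; they make `Pi.single i 1` a kernel vector of
`bracketMatrix c i`. -/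
noncomputable def bracketMatrix (c : Fin n → Fin n → Fin n → ℝ) (i : Fin n) :
    Matrix (Fin n) (Fin n) ℝ :=
  fun j m => ((if i = m then c m j m else 0) + (if j = m then c m i m else 0) - c i j m) / 2

theorem bracketMatrix_sub_bracketMatrix {c : Fin n → Fin n → Fin n → ℝ}
    (hc : ∀ p q m, c q p m = -c p q m) (p q m : Fin n) :
    bracketMatrix c q p m - bracketMatrix c p q m = c p q m := by
  simp only [bracketMatrix, hc q p m]
  ring

theorem bracketMatrix_apply_self_right {c : Fin n → Fin n → Fin n → ℝ}
    (hc : ∀ p q m, c q p m = -c p q m) (i j : Fin n) :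
    bracketMatrix c i j i = 0 := by
  have hiii : c i i i = 0 := by linarith [hc i i i]
  rcases eq_or_ne j i with rfl | hji
  · simp [bracketMatrix, hiii]
  · simp [bracketMatrix, hji]

theorem exists_sum_dualBracket_eq
    {μ : Dual ℝ (Fin n → ℝ) →ₗ[ℝ] Dual ℝ (Fin n → ℝ) →ₗ[ℝ] Dual ℝ (Fin n → ℝ)}
    (hμ : μ.IsAlt) :
    ∃ F : Fin n → (Fin n → ℝ) →ₗ[ℝ] (Fin n → ℝ), (∀ i, F i (Pi.single i 1) = 0) ∧
      ∀ ψ φ, μ ψ φ = ∑ i, dualBracket (F i) (Pi.single i 1) ψ φ := by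
  set ε := (Pi.basisFun ℝ (Fin n)).dualBasis
  set c : Fin n → Fin n → Fin n → ℝ := fun p q m => μ (ε p) (ε q) (Pi.single m 1)
  have hc : ∀ p q m, c q p m = -c p q m := fun p q m => by
    simp only [c, ← hμ.neg (ε p) (ε q), LinearMap.neg_apply]
  refine ⟨fun i => Matrix.toLin' (bracketMatrix c i), fun i => ?_, ?_⟩
  · ext j
    simpa using bracketMatrix_apply_self_right hc i j
  suffices μ = ∑ i, dualBracketₗ (Matrix.toLin' (bracketMatrix c i)) (Pi.single i 1) by
    simp [this, LinearMap.sum_apply]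
  refine LinearMap.ext_basis ε ε fun p q => (Pi.basisFun ℝ (Fin n)).ext fun m => ?_
  simp only [LinearMap.sum_apply, dualBracketₗ_apply]
  rw [← LinearMap.sum_apply, sum_dualBracket_single_dualBasis_apply]
  simpa [Matrix.toLin'_apply] using (bracketMatrix_sub_bracketMatrix hc p q m).symm

end

/-- Every `n`-dimensional real Lie algebra `L` is isomorphic to `(ℝⁿ)*` equipped with a
combined bracket `[ψ,φ]_{F₁,v₁,…,Fₙ,vₙ} = Σᵢ [ψ,φ]_{Fᵢ,vᵢ}` for some linear maps
`Fᵢ : ℝⁿ → ℝⁿ` and eigenvectors `vᵢ` of `Fᵢ`. -/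
theorem lieAlgebra_iso_sum_dualBracket (L : Type*) [LieRing L] [LieAlgebra ℝ L]
    [FiniteDimensional ℝ L] (n : ℕ) (hn : n = Module.finrank ℝ L) :
    ∃ (F : Fin n → ((Fin n → ℝ) →ₗ[ℝ] (Fin n → ℝ)))
      (v : Fin n → (Fin n → ℝ)) (lam : Fin n → ℝ),
      (∀ i, (F i) (v i) = lam i • v i) ∧
      ∃ e : L ≃ₗ[ℝ] Module.Dual ℝ (Fin n → ℝ),
        ∀ x y : L, e ⁅x, y⁆ = ∑ i, dualBracket (F i) (v i) (e x) (e y) := by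
  let e : L ≃ₗ[ℝ] Dual ℝ (Fin n → ℝ) := LinearEquiv.ofFinrankEq _ _ (by simp [hn])
  let μ := ((LieModule.toEnd ℝ L L : L →ₗ[ℝ] Module.End ℝ L).compl₁₂
    e.symm.toLinearMap e.symm.toLinearMap).compr₂ e.toLinearMap
  obtain ⟨F, hF, hμF⟩ := exists_sum_dualBracket_eq (μ := μ) fun ψ => by simp [μ]
  refine ⟨F, fun i => Pi.single i 1, 0, fun i => by simp [hF], e, fun x y => ?_⟩
  simpa [μ] using hμF (e x) (e y)
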